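/- arXiv:1405.5179 — 6 statements merged into one kernel-verified Lean document; each statement's English description precedes it below -/
import Mathlib

section
/- Suppose f : (ℂ^n, 0) → (ℂ, 0) is holomorphic and satisfies f = Σ_j g_j ∂f/∂z_j for holomorphic germs g_j, and 0 is an isolated zero of the gradient ∇f with f having a critical point at 0 (i.e., f is an isolated singularity). Then g_1(0) = ... = g_n(0) = 0. -/
/-!
Let `v = ∑ⱼ gⱼ ∂ⱼ`. Differentiating `f = v f` gives `v (∂ᵢ f) = ∂ᵢ f - ∑ₖ ∂ᵢ gₖ ∂ₖ f`, so along an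
integral curve `z` of `v` the gradient `∇f (z t)` solves the linear ODE `y' = (1 - (Dv)ᵀ) y`.
For the integral curve through the critical point `0` this forces `∇f (z t) = 0` by Grönwall,
and since `0` is an isolated critical point the curve is constant for small `t ≥ 0`.
Hence `v 0 = z' 0 = 0`.
-/

open MvPolynomial Set Filter Topology Matrix

theorem eqOn_zero_of_hasDerivAt_clm_apply {𝕜 E : Type*} [NontriviallyNormedField 𝕜]
    [NormedAddCommGroup E] [NormedSpace 𝕜 E] [NormedSpace ℝ E] {A : ℝ → E →L[𝕜] E}
    {V : ℝ → E} {a b : ℝ} (hA : ContinuousOn A (Icc a b))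
    (hV : ∀ t ∈ Icc a b, HasDerivAt V (A t (V t)) t) (ha : V a = 0) : EqOn V 0 (Icc a b) := by
  obtain ⟨C, hC⟩ := isCompact_Icc.exists_bound_of_continuousOn hA
  exact eq_zero_of_abs_deriv_le_mul_abs_self_of_eq_zero_right
    (fun t ht => (hV t ht).continuousAt.continuousWithinAt)
    (fun t ht => (hV t (Ico_subset_Icc_self ht)).hasDerivWithinAt) ha
    (fun t ht => (A t).le_of_opNorm_le (hC t (Ico_subset_Icc_self ht)) (V t))

theorem Matrix.eqOn_zero_of_hasDerivAt_mulVec {ι 𝕜 : Type*} [Fintype ι] [DecidableEq ι]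
    [RCLike 𝕜] {A : ℝ → Matrix ι ι 𝕜} {V : ℝ → ι → 𝕜} {a b : ℝ}
    (hA : ContinuousOn A (Icc a b)) (hV : ∀ t ∈ Icc a b, HasDerivAt V (A t *ᵥ V t) t)
    (ha : V a = 0) : EqOn V 0 (Icc a b) :=
  let L : Matrix ι ι 𝕜 →ₗ[𝕜] (ι → 𝕜) →L[𝕜] (ι → 𝕜) :=
    LinearMap.toContinuousLinearMap.toLinearMap ∘ₗ Matrix.toLin'.toLinearMap
  eqOn_zero_of_hasDerivAt_clm_apply (A := fun t => L (A t))
    (L.continuous_of_finiteDimensional.comp_continuousOn hA) (by simpa [L] using hV) ha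

namespace MvPolynomial

section Algebra

variable {σ R : Type*}

theorem pderiv_pderiv_comm [CommSemiring R] (i k : σ) (p : MvPolynomial σ R) :
    pderiv i (pderiv k p) = pderiv k (pderiv i p) := by
  classical
  induction p using MvPolynomial.induction_on with
  | C a => simp
  | add p q hp hq => simp [hp, hq]
  | mul_X p j hp =>
    simp only [pderiv_mul, map_add, hp, pderiv_X, Pi.single_apply]
    split_ifs <;> simp [add_right_comm]

theorem eval_zero_pderiv [CommSemiring R] (i : σ) (p : MvPolynomial σ R) :
    eval 0 (pderiv i p) = coeff (Finsupp.single i 1) p := by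
  simp [eval_zero, constantCoeff_eq, coeff_pderiv]

theorem sum_mul_pderiv_pderiv_of_eq_sum_mul_pderiv [CommRing R] [Fintype σ]
    {f : MvPolynomial σ R} {g : σ → MvPolynomial σ R} (hrel : f = ∑ k, g k * pderiv k f)
    (i : σ) :
    ∑ k, g k * pderiv k (pderiv i f) = pderiv i f - ∑ k, pderiv i (g k) * pderiv k f := by
  have h := congrArg (pderiv i) hrel
  simp only [map_sum, pderiv_mul, Finset.sum_add_distrib, pderiv_pderiv_comm i] at h
  linear_combination -h

end Algebra

theorem hasDerivAt_eval_comp {σ 𝕜 𝔸 : Type*} [Fintype σ] [NontriviallyNormedField 𝕜]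
    [NormedCommRing 𝔸] [NormedAlgebra 𝕜 𝔸] (p : MvPolynomial σ 𝔸) {z : 𝕜 → σ → 𝔸}
    {w : σ → 𝔸} {t : 𝕜} (hz : HasDerivAt z w t) :
    HasDerivAt (fun s => eval (z s) p) (∑ j, eval (z t) (pderiv j p) * w j) t := by
  classical
  induction p using MvPolynomial.induction_on with
  | C a => simpa using hasDerivAt_const t a
  | add p q hp hq => simpa [add_mul, Finset.sum_add_distrib] using hp.fun_add hq
  | mul_X p i hp =>
    convert hp.fun_mul (hasDerivAt_pi.mp hz i) using 1
    · simp
    · simp [pderiv_X, Pi.single_apply, mul_ite, apply_ite (eval (z t)), ite_mul, add_mul,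
        Finset.sum_add_distrib, Finset.sum_mul]
      ring_nf

theorem eval_pderiv_eq_zero_of_hasDerivAt {σ 𝕜 : Type*} [Fintype σ] [RCLike 𝕜]
    {f : MvPolynomial σ 𝕜} {g : σ → MvPolynomial σ 𝕜} (hrel : f = ∑ k, g k * pderiv k f)
    {z : ℝ → σ → 𝕜} {a b : ℝ} (hz : ∀ t ∈ Icc a b, HasDerivAt z (fun k => eval (z t) (g k)) t)
    (ha : ∀ i, eval (z a) (pderiv i f) = 0) :
    ∀ t ∈ Icc a b, ∀ i, eval (z t) (pderiv i f) = 0 := by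
  classical
  set M : ℝ → Matrix σ σ 𝕜 := fun t => 1 - Matrix.of fun i k => eval (z t) (pderiv i (g k))
  have hM : ContinuousOn M (Icc a b) := by
    have hzc : ContinuousOn z (Icc a b) := fun t ht => (hz t ht).continuousAt.continuousWithinAt
    refine continuousOn_const.sub (continuousOn_pi.2 fun i => continuousOn_pi.2 fun k => ?_)
    exact (continuous_eval _).comp_continuousOn hzc
  have hV : ∀ t ∈ Icc a b, HasDerivAt (fun s i => eval (z s) (pderiv i f))
      (M t *ᵥ fun i => eval (z t) (pderiv i f)) t := by
    intro t ht
    refine hasDerivAt_pi.2 fun i => ?_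
    refine (hasDerivAt_eval_comp (pderiv i f) (hz t ht)).congr_deriv ?_
    have key : ∑ j, eval (z t) (pderiv j (pderiv i f)) * eval (z t) (g j) =
        eval (z t) (pderiv i f) - ∑ k, eval (z t) (pderiv i (g k)) * eval (z t) (pderiv k f) := by
      simpa [mul_comm] using
        congrArg (eval (z t)) (sum_mul_pderiv_pderiv_of_eq_sum_mul_pderiv hrel i)
    rw [key]
    simp only [M, sub_mulVec, one_mulVec]
    simp [mulVec, dotProduct]
  intro t ht i
  exact congrFun (Matrix.eqOn_zero_of_hasDerivAt_mulVec hM hV (by ext; apply ha) ht) i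

end MvPolynomial

theorem coeffs_vanish_of_euler_type_relation_general {n : ℕ}
    (f : MvPolynomial (Fin n) ℂ) (g : Fin n → MvPolynomial (Fin n) ℂ)
    (hlin : ∀ j : Fin n, coeff (Finsupp.single j 1) f = 0)
    (hiso : ∃ ε > (0 : ℝ), ∀ z : Fin n → ℂ, ‖z‖ < ε →
      (∀ j, eval z (pderiv j f) = 0) → z = 0)
    (hrel : f = ∑ j, g j * pderiv j f) :
    ∀ j, eval (0 : Fin n → ℂ) (g j) = 0 := by
  obtain ⟨ε, hε, hiso⟩ := hiso
  have hG : ContDiff ℝ 1 fun x : Fin n → ℂ => fun j => eval x (g j) :=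
    contDiff_pi.2 fun j => (AnalyticOnNhd.eval_mvPolynomial (g j)).contDiff.restrict_scalars ℝ
  obtain ⟨z, hz0, r, hr, hz⟩ :=
    (hG.contDiffAt (x := 0)).exists_forall_mem_closedBall_exists_eq_forall_mem_Ioo_hasDerivAt₀ 0
  have hIcc : Icc 0 (r / 2) ⊆ Ioo (0 - r) (0 + r) := fun t ht =>
    ⟨by linarith [ht.1], by linarith [ht.2]⟩
  have hcrit : ∀ t ∈ Icc 0 (r / 2), ∀ i, eval (z t) (pderiv i f) = 0 :=
    eval_pderiv_eq_zero_of_hasDerivAt hrel (fun t ht => hz t (hIcc ht))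
      fun i => by rw [hz0, eval_zero_pderiv, hlin]
  have hz' : HasDerivAt z (fun j => eval (z 0) (g j)) 0 := hz 0 (by simpa using hr)
  have hconst : z =ᶠ[𝓝[≥] 0] fun _ => 0 := by
    have hsmall : ∀ᶠ t in 𝓝 0, ‖z t‖ < ε :=
      hz'.continuousAt.norm.eventually_lt continuousAt_const (by simpa [hz0] using hε)
    filter_upwards [nhdsWithin_le_nhds hsmall, Icc_mem_nhdsGE (half_pos hr)] with t hsmall ht
    exact hiso _ hsmall (hcrit t ht)
  have hG0 := (uniqueDiffWithinAt_Ici 0).eq_deriv _ hz'.hasDerivWithinAt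
    ((hasDerivWithinAt_const 0 _ 0).congr_of_eventuallyEq hconst hz0)
  rw [hz0] at hG0
  exact congrFun hG0

/-- (Saito, Lemma 4.2.) Suppose `f` vanishes at `0` together with its gradient,
`0` is an isolated zero of the gradient `∇f`, and `f = ∑ j, g j * ∂f/∂z j`.
Then `g j (0) = 0` for every `j`. (Polynomial formulation of the germ
statement.) -/
theorem coeffs_vanish_of_euler_type_relation {n : ℕ}
    (f : MvPolynomial (Fin n) ℂ) (g : Fin n → MvPolynomial (Fin n) ℂ)
    (hf0 : coeff 0 f = 0)
    (hlin : ∀ j : Fin n, coeff (Finsupp.single j 1) f = 0)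
    (hiso : ∃ ε > (0 : ℝ), ∀ z : Fin n → ℂ, ‖z‖ < ε →
      (∀ j, eval z (pderiv j f) = 0) → z = 0)
    (hrel : f = ∑ j, g j * pderiv j f) :
    ∀ j, eval (0 : Fin n → ℂ) (g j) = 0 :=
  coeffs_vanish_of_euler_type_relation_general f g hlin hiso hrel
end

section
/- Let f_0 be a weakly quasihomogeneous polynomial of type (1; l) with all weights in (0,1), l_n > 1/2, which is a singularity with isolated critical point at 0. Then f_0 contains a monomial of the form z_i z_n (for some i < n) with nonzero coefficient. -/
/-! Suppose no `z_i z_n` with `i ≠ n` occurs in `f₀`. A monomial `z_j z_n ^ k` has weight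
`l_j + k l_n`, and since `0 < l_j < 1` and `l_n > 1/2` this equals `1` only for `k = 1`, `j ≠ n`.
So `f₀` contains no monomial `z_j z_n ^ k` at all, hence every `∂f₀/∂z_j` vanishes identically
on the `z_n`-axis, and `0` is not an isolated critical point. -/

open MvPolynomial

namespace MvPolynomial

variable {σ R : Type*} [CommSemiring R] [DecidableEq σ]

theorem eval_pi_single_eq_zero {g : MvPolynomial σ R} {c : σ}
    (h : ∀ k : ℕ, coeff (Finsupp.single c k) g = 0) (t : R) :
    eval (Pi.single c t) g = 0 := by
  rw [eval_eq]
  refine Finset.sum_eq_zero fun d hd => ?_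
  by_cases hdc : d = Finsupp.single c (d c)
  · rw [hdc] at hd
    exact absurd (h _) (mem_support_iff.mp hd)
  · obtain ⟨i, hi⟩ : ∃ i, d i ≠ 0 ∧ i ≠ c := by
      by_contra! hsupp
      refine hdc (Finsupp.ext fun i => ?_)
      rcases eq_or_ne i c with rfl | hic
      · simp
      · rw [Finsupp.single_eq_of_ne hic]
        by_contra hdi
        exact hic (hsupp i hdi)
    refine mul_eq_zero_of_right _ (Finset.prod_eq_zero (Finsupp.mem_support_iff.mpr hi.1) ?_)
    rw [Pi.single_eq_of_ne hi.2, zero_pow hi.1]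

theorem eval_pi_single_pderiv_eq_zero {f : MvPolynomial σ R} {j c : σ}
    (h : ∀ k : ℕ, coeff (Finsupp.single j 1 + Finsupp.single c k) f = 0) (t : R) :
    eval (Pi.single c t) (pderiv j f) = 0 :=
  eval_pi_single_eq_zero (fun k => by rw [coeff_pderiv, add_comm, h, zero_mul]) t

end MvPolynomial

theorem sum_single_add_single_mul {σ : Type*} [Fintype σ] (l : σ → ℝ) (j c : σ) (k : ℕ) :
    ∑ i, ((Finsupp.single j 1 + Finsupp.single c k : σ →₀ ℕ) i : ℝ) * l i = l j + k * l c := by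
  classical
  simp [Finsupp.single_apply, add_mul, Finset.sum_add_distrib]

theorem eq_one_of_add_nat_mul_eq_one {x y : ℝ} {k : ℕ} (hx : 0 < x) (hx1 : x < 1)
    (hy : 1 / 2 < y) (h : x + k * y = 1) : k = 1 := by
  rcases k with _ | _ | k
  · simp only [CharP.cast_eq_zero, zero_mul, add_zero] at h; linarith
  · rfl
  · push_cast at h; nlinarith

theorem exists_mixed_quadratic_monomial_general {n : ℕ}
    (f₀ : MvPolynomial (Fin (n + 1)) ℂ) (l : Fin (n + 1) → ℝ)
    (hl : ∀ j, 0 < l j ∧ l j < 1) (hln : 1 / 2 < l (Fin.last n))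
    (hqh : ∀ a ∈ f₀.support, ∑ j, (a j : ℝ) * l j = 1)
    (hiso : ∃ ε > (0 : ℝ), ∀ z : Fin (n + 1) → ℂ, ‖z‖ < ε →
      (∀ j, eval z (pderiv j f₀) = 0) → z = 0) :
    ∃ i : Fin (n + 1), i ≠ Fin.last n ∧
      coeff (Finsupp.single i 1 + Finsupp.single (Fin.last n) 1) f₀ ≠ 0 := by
  by_contra! hcon
  have haxis : ∀ j k, coeff (Finsupp.single j 1 + Finsupp.single (Fin.last n) k) f₀ = 0 := by
    intro j k
    by_contra hne
    have hw := hqh _ (mem_support_iff.mpr hne)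
    rw [sum_single_add_single_mul] at hw
    obtain rfl := eq_one_of_add_nat_mul_eq_one (hl j).1 (hl j).2 hln hw
    have hj : j ≠ Fin.last n := by rintro rfl; rw [Nat.cast_one] at hw; linarith
    exact hne (hcon j hj)
  obtain ⟨ε, hε, hiso⟩ := hiso
  have hz := hiso (Pi.single (Fin.last n) ((ε / 2 : ℝ) : ℂ))
    (by rw [Pi.norm_single, Complex.norm_real, Real.norm_of_nonneg (by positivity)]; linarith)
    (fun j => eval_pi_single_pderiv_eq_zero (haxis j) _)
  have hlast := congr_fun hz (Fin.last n)
  rw [Pi.single_eq_same, Pi.zero_apply, Complex.ofReal_eq_zero] at hlast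
  linarith

/-- (cf. Saito, Korollar 1.6.) If `f₀` is a weakly quasihomogeneous isolated
singularity of type `(1; l)` with all weights in `(0,1)` and the last weight
`> 1/2`, then some monomial `z i * z_last` (`i ≠ last`) appears in `f₀` with a
nonzero coefficient. -/
theorem exists_mixed_quadratic_monomial {n : ℕ} (hn : 1 ≤ n)
    (f₀ : MvPolynomial (Fin (n + 1)) ℂ) (l : Fin (n + 1) → ℝ)
    (hl : ∀ j, 0 < l j ∧ l j < 1) (hln : 1 / 2 < l (Fin.last n))
    (hqh : ∀ a ∈ f₀.support, ∑ j, (a j : ℝ) * l j = 1)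
    (hf0 : coeff 0 f₀ = 0)
    (hcrit : ∀ j, eval (0 : Fin (n + 1) → ℂ) (pderiv j f₀) = 0)
    (hiso : ∃ ε > (0 : ℝ), ∀ z : Fin (n + 1) → ℂ, ‖z‖ < ε →
      (∀ j, eval z (pderiv j f₀) = 0) → z = 0) :
    ∃ i : Fin (n + 1), i ≠ Fin.last n ∧
      coeff (Finsupp.single i 1 + Finsupp.single (Fin.last n) 1) f₀ ≠ 0 :=
  exists_mixed_quadratic_monomial_general f₀ l hl hln hqh hiso
end

section
/- With the notation of Theorem 4 (L, L⁻, L⁰, l_min), the quantity 1/l_min − 1 is invariant under the reduction step that removes a pair of weights {l_i, l_n} with l_n > 1/2 and l_i = 1 − l_n from L: if L' = L \ [l_i, l_n], then min L'⁰ computed from L' equals min L⁰ computed from L, provided L' is nonempty; if L' is empty then 1/l_min − 1 = 1. -/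
/-- `L⁻ := [1 − a : a ∈ L, a > 1/2]`. -/
def Lminus (L : Multiset ℚ) : Multiset ℚ :=
  (L.filter (fun a => 1 / 2 < a)).map (fun a => 1 - a)

/-- `L⁰ := (L \ L⁻) ∪ {1/2}`. -/
def Lzero (L : Multiset ℚ) : Multiset ℚ :=
  (L - Lminus L) + {1 / 2}

/-- `l_min := min L⁰` (valued in `WithTop ℚ`). -/
noncomputable def lmin (L : Multiset ℚ) : WithTop ℚ :=
  ((Lzero L).map (fun q => (q : WithTop ℚ))).inf

/-! Write `L = L' + {1 - b, b}` with `b > 1/2`. The new entry `1 - b` of `L⁻` cancels the element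
`1 - b` of `L`, while `b` survives in `L \ L⁻` because every entry of `L⁻` is below `1/2`. Hence
`L⁰ = L'⁰ + {b}`, and since `min L'⁰ ≤ 1/2 < b` the minimum does not change. -/

theorem Multiset.add_pair_sub_add_singleton {α : Type*} [DecidableEq α] {a b : α}
    {s t : Multiset α} (hb : b ∉ t) : s + {a, b} - (t + {a}) = s - t + {b} := by
  ext x
  simp only [Multiset.count_sub, Multiset.count_add, Multiset.insert_eq_cons,
    Multiset.count_cons, Multiset.count_singleton]
  by_cases hxb : x = b
  · subst hxb
    simp only [Multiset.count_eq_zero.mpr hb]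
    split_ifs <;> omega
  · split_ifs <;> omega

theorem Lminus_add (s t : Multiset ℚ) : Lminus (s + t) = Lminus s + Lminus t := by
  simp only [Lminus, Multiset.filter_add, Multiset.map_add]

theorem lt_half_of_mem_Lminus {s : Multiset ℚ} {a : ℚ} (ha : a ∈ Lminus s) : a < 1 / 2 := by
  obtain ⟨b, hb, rfl⟩ := Multiset.mem_map.mp ha
  linarith [(Multiset.mem_filter.mp hb).2]

theorem Lminus_pair {b : ℚ} (hb : 1 / 2 < b) : Lminus {1 - b, b} = {1 - b} := by
  have h : ¬ 1 / 2 < 1 - b := by linarith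
  rw [Lminus, Multiset.insert_eq_cons, Multiset.filter_cons_of_neg _ h, Multiset.filter_singleton,
    if_pos hb, Multiset.map_singleton]

theorem Lzero_add_pair (s : Multiset ℚ) {b : ℚ} (hb : 1 / 2 < b) :
    Lzero (s + {1 - b, b}) = Lzero s + {b} := by
  have hb' : b ∉ Lminus s := fun h => (lt_half_of_mem_Lminus h).not_gt hb
  rw [Lzero, Lzero, Lminus_add, Lminus_pair hb,
    Multiset.add_pair_sub_add_singleton hb', add_right_comm]

-- As elaborated, the coercion in `lmin` goes through the `Multiset` monad (a `bind`, not a `map`).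
theorem lmin_eq_inf_map_coe (s : Multiset ℚ) :
    lmin s = ((Lzero s).map (fun q : ℚ => (q : WithTop ℚ))).inf := by
  rw [lmin, Multiset.map_id']
  exact congrArg _ (Multiset.bind_singleton _ _)

theorem half_mem_Lzero (s : Multiset ℚ) : 1 / 2 ∈ Lzero s :=
  Multiset.mem_add.mpr (Or.inr (Multiset.mem_singleton_self _))

theorem lmin_le_half (s : Multiset ℚ) : lmin s ≤ ((1 / 2 : ℚ) : WithTop ℚ) := by
  rw [lmin_eq_inf_map_coe]
  exact Multiset.inf_le (Multiset.mem_map_of_mem _ (half_mem_Lzero s))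

theorem lmin_zero : lmin 0 = ((1 / 2 : ℚ) : WithTop ℚ) := by
  simp [lmin_eq_inf_map_coe, Lzero, Lminus]

theorem lmin_add_pair (s : Multiset ℚ) {b : ℚ} (hb : 1 / 2 < b) :
    lmin (s + {1 - b, b}) = lmin s := by
  have hle : lmin s ≤ (b : WithTop ℚ) := (lmin_le_half s).trans (by exact_mod_cast hb.le)
  rw [lmin_eq_inf_map_coe, Lzero_add_pair s hb, Multiset.map_add, Multiset.inf_add,
    Multiset.map_singleton, Multiset.inf_singleton, ← lmin_eq_inf_map_coe, inf_eq_left.mpr hle]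

/-- The quantity `1/l_min − 1` is invariant under removing from `L` a pair of
weights `lN > 1/2` and `lI = 1 − lN`: if `L' := L \ [lI, lN]` is nonempty then
`min L'⁰ = min L⁰`, and if `L'` is empty then `1/l_min − 1 = 1`. -/
theorem lmin_invariant_under_reduction (L : Multiset ℚ) (lI lN : ℚ)
    (hlN : 1 / 2 < lN) (hlI : lI = 1 - lN)
    (hmem : ({lI, lN} : Multiset ℚ) ≤ L) :
    ((L - {lI, lN} ≠ 0) → lmin (L - {lI, lN}) = lmin L) ∧
    ((L - {lI, lN} = 0) → ∃ q : ℚ, lmin L = (q : WithTop ℚ) ∧ 1 / q - 1 = 1) := by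
  subst hlI
  have hL : lmin L = lmin (L - {1 - lN, lN}) := by
    conv_lhs => rw [← tsub_add_cancel_of_le hmem]
    exact lmin_add_pair _ hlN
  refine ⟨fun _ => hL.symm, fun h0 => ⟨1 / 2, by rw [hL, h0, lmin_zero], by norm_num⟩⟩
end

section
/- Let g_0 ∈ ℂ[[z_3, ..., z_n]] be a power series with g_0 ∉ (∂g_0/∂z_3, ..., ∂g_0/∂z_n) (ideal generated by its partials). Define f := z_1 z_2 + (1 + z_2) g_0 ∈ ℂ[[z_1, ..., z_n]]. Then z_1 ∉ (∂f/∂z_2, ∂f/∂z_3, ..., ∂f/∂z_n), the ideal generated by all partials of f except ∂f/∂z_1. -/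
/-! Substituting `-g₀` for `z₁` (legitimate because `g₀(0) = 0`) is a ring endomorphism of
`ℂ[[z]]` that kills `∂f/∂z₂ = z₁ + g₀` and fixes every `∂g₀/∂z_j`, since these do not involve
`z₁`. It therefore maps the ideal `(∂f/∂z₂, (1 + z₂) ∂g₀/∂z₃, …)` into `(∂g₀/∂z₃, …)`; if `z₁`
were in the former, its image `-g₀` would lie in the latter. -/

open MvPowerSeries

/-- Partial derivative of a multivariate formal power series. -/
noncomputable def psPderiv {n : ℕ} (j : Fin n) (f : MvPowerSeries (Fin n) ℂ) :
    MvPowerSeries (Fin n) ℂ :=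
  fun a => ((a j : ℂ) + 1) * MvPowerSeries.coeff (a + Finsupp.single j 1) f

namespace MvPowerSeries

variable {σ R : Type*} [CommRing R]

theorem HasSubst.update_X [DecidableEq σ] (i : σ) {b : MvPowerSeries σ R}
    (hb : IsNilpotent (constantCoeff b)) : HasSubst (Function.update X i b) where
  const_coeff s := by
    rcases eq_or_ne s i with rfl | hs
    · simp [hb]
    · simp [hs]
  coeff_zero d := by
    refine ((HasSubst.X (S := R)).coeff_zero d |>.insert i).subset fun s hs => ?_
    rcases eq_or_ne s i with rfl | hsi
    · exact Set.mem_insert _ _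
    · exact Set.mem_insert_of_mem _ (by simpa [hsi] using hs)

theorem rescale_update_zero_of_coeff_eq_zero [DecidableEq σ] {i : σ} {f : MvPowerSeries σ R}
    (hf : ∀ d : σ →₀ ℕ, d i ≠ 0 → coeff d f = 0) :
    rescale (Function.update 1 i 0) f = f := by
  ext d
  rw [coeff_rescale]
  by_cases hd : d i = 0
  · rw [Finsupp.prod, Finset.prod_eq_one fun s hs => ?_, one_mul]
    have hsi : s ≠ i := fun h => Finsupp.mem_support_iff.mp hs (h ▸ hd)
    simp [hsi]
  · rw [hf d hd, mul_zero]

theorem subst_update_X_of_coeff_eq_zero [DecidableEq σ] {i : σ} {b : MvPowerSeries σ R}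
    (hb : IsNilpotent (constantCoeff b)) {f : MvPowerSeries σ R}
    (hf : ∀ d : σ →₀ ℕ, d i ≠ 0 → coeff d f = 0) :
    subst (Function.update X i b) f = f := by
  have hU := HasSubst.update_X i hb
  set a : σ → R := Function.update (1 : σ → R) i 0
  have hX : (fun s => subst (Function.update X i b) ((a • X : σ → MvPowerSeries σ R) s)) =
      (a • X : σ → MvPowerSeries σ R) := by
    funext s
    rw [Pi.smul_apply', subst_smul hU, subst_X hU]
    rcases eq_or_ne s i with rfl | hs <;> simp [a, *]
  calc subst (Function.update X i b) f
      = subst (Function.update X i b) (subst (a • X) f) := by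
        rw [← rescale_eq_subst, rescale_update_zero_of_coeff_eq_zero hf]
    _ = subst (a • X) f := by rw [subst_comp_subst_apply (HasSubst.smul_X a) hU, hX]
    _ = f := by rw [← rescale_eq_subst, rescale_update_zero_of_coeff_eq_zero hf]

theorem pderiv_eq_zero_of_coeff_eq_zero {i : σ} {f : MvPowerSeries σ R}
    (hf : ∀ d : σ →₀ ℕ, d i ≠ 0 → coeff d f = 0) : pderiv R i f = 0 := by
  ext d
  rw [coeff_pderiv, hf _ (by simp), zero_mul, map_zero]

theorem coeff_pderiv_eq_zero_of_coeff_eq_zero {i : σ} {f : MvPowerSeries σ R}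
    (hf : ∀ d : σ →₀ ℕ, d i ≠ 0 → coeff d f = 0) (j : σ) :
    ∀ d : σ →₀ ℕ, d i ≠ 0 → coeff d (pderiv R j f) = 0 := by
  intro d hd
  rw [coeff_pderiv, hf _ (by rw [Finsupp.add_apply]; omega), zero_mul]

end MvPowerSeries

theorem psPderiv_eq_pderiv {n : ℕ} (j : Fin n) (f : MvPowerSeries (Fin n) ℂ) :
    psPderiv j f = pderiv ℂ j f := by
  ext a
  rw [coeff_pderiv, mul_comm]
  rfl

section

variable {σ R : Type*} [CommRing R] {i j : σ}

theorem pderiv_X_mul_X_add_one_add_X_mul_self (hij : i ≠ j) (g : MvPowerSeries σ R) :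
    pderiv R j (X i * X j + (1 + X j) * g) = X i + g + (1 + X j) * pderiv R j g := by
  simp [pderiv_X_of_ne hij]
  ring

theorem pderiv_X_mul_X_add_one_add_X_mul_of_ne {k : σ} (hki : k ≠ i) (hkj : k ≠ j)
    (g : MvPowerSeries σ R) :
    pderiv R k (X i * X j + (1 + X j) * g) = (1 + X j) * pderiv R k g := by
  simp [pderiv_X_of_ne hki.symm, pderiv_X_of_ne hkj.symm]

theorem X_notMem_span_pderiv_X_mul_X_add_one_add_X_mul [DecidableEq σ] (hij : i ≠ j)
    {g : MvPowerSeries σ R} (hgi : ∀ d : σ →₀ ℕ, d i ≠ 0 → coeff d g = 0)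
    (hgj : ∀ d : σ →₀ ℕ, d j ≠ 0 → coeff d g = 0) (hg : IsNilpotent (constantCoeff g))
    (hg_notMem : g ∉ Ideal.span {p | ∃ k, k ≠ i ∧ k ≠ j ∧ p = pderiv R k g}) :
    X i ∉ Ideal.span {p | ∃ k, k ≠ i ∧ p = pderiv R k (X i * X j + (1 + X j) * g)} := by
  set I := Ideal.span {p | ∃ k, k ≠ i ∧ k ≠ j ∧ p = pderiv R k g}
  have hb : IsNilpotent (constantCoeff (-g)) := by simpa using hg.neg
  have hU := HasSubst.update_X i hb
  let ψ := substAlgHom (R := R) hU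
  have hψX : ψ (X i) = -g := by rw [substAlgHom_apply, subst_X hU, Function.update_self]
  have hψ_fix {p} (hp : ∀ d : σ →₀ ℕ, d i ≠ 0 → coeff d p = 0) : ψ p = p :=
    (substAlgHom_apply hU p).trans (subst_update_X_of_coeff_eq_zero hb hp)
  have hI : I ≤ I.comap ψ := Ideal.span_le.2 <| by
    rintro _ ⟨k, hki, hkj, rfl⟩
    rw [SetLike.mem_coe, Ideal.mem_comap, hψ_fix (coeff_pderiv_eq_zero_of_coeff_eq_zero hgi k)]
    exact Ideal.subset_span ⟨k, hki, hkj, rfl⟩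
  have hψ : Ideal.span {p | ∃ k, k ≠ i ∧ p = pderiv R k (X i * X j + (1 + X j) * g)} ≤
      I.comap ψ := Ideal.span_le.2 <| by
    rintro _ ⟨k, hki, rfl⟩
    rw [SetLike.mem_coe, Ideal.mem_comap]
    by_cases hkj : k = j
    · rw [hkj, pderiv_X_mul_X_add_one_add_X_mul_self hij, pderiv_eq_zero_of_coeff_eq_zero hgj,
        mul_zero, add_zero, map_add, hψX, hψ_fix hgi, neg_add_cancel]
      exact I.zero_mem
    · rw [pderiv_X_mul_X_add_one_add_X_mul_of_ne hki hkj, map_mul]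
      exact I.mul_mem_left _ (hI (Ideal.subset_span ⟨k, hki, hkj, rfl⟩))
  intro hmem
  exact hg_notMem (neg_mem_iff.mp (hψX ▸ hψ hmem))

end

/-- Let `g₀ ∈ ℂ[[z₂,…,z_{n-1}]]` (a power series in `n ≥ 4` variables,
depending only on the variables of index `≥ 2`), vanishing at `0`, with `g₀`
not in the ideal generated by its own partial derivatives.  Then for
`f := z₀ z₁ + (1 + z₁) g₀` the variable `z₀` does not belong to the ideal
generated by all partials of `f` except `∂f/∂z₀`. -/
theorem not_mem_ideal_of_partials {n : ℕ}
    (g₀ : MvPowerSeries (Fin (n + 4)) ℂ)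
    (hdep : ∀ a : Fin (n + 4) →₀ ℕ,
      (a 0 ≠ 0 ∨ a 1 ≠ 0) → MvPowerSeries.coeff a g₀ = 0)
    (hg0 : MvPowerSeries.coeff 0 g₀ = 0)
    (hnotmem : g₀ ∉ Ideal.span
      {p | ∃ j : Fin (n + 4), 2 ≤ (j : ℕ) ∧ p = psPderiv j g₀}) :
    (MvPowerSeries.X 0 : MvPowerSeries (Fin (n + 4)) ℂ) ∉
      Ideal.span {p | ∃ j : Fin (n + 4), j ≠ 0 ∧
        p = psPderiv j (MvPowerSeries.X 0 * MvPowerSeries.X 1 +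
          (1 + MvPowerSeries.X 1) * g₀)} := by
  have two_le_iff (k : Fin (n + 4)) : 2 ≤ (k : ℕ) ↔ k ≠ 0 ∧ k ≠ 1 := by
    simp only [ne_eq, Fin.ext_iff, Fin.val_zero, Fin.val_one]
    omega
  have hconst : IsNilpotent (constantCoeff g₀) := by
    rw [← coeff_zero_eq_constantCoeff_apply, hg0]
    exact IsNilpotent.zero
  simp only [psPderiv_eq_pderiv, two_le_iff, and_assoc] at hnotmem ⊢
  exact X_notMem_span_pderiv_X_mul_X_add_one_add_X_mul zero_ne_one
    (fun d h => hdep d (Or.inl h)) (fun d h => hdep d (Or.inr h)) hconst hnotmem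
end

section
/- The polynomial g_0 := z_3^4 + z_3^2 z_4^3 + z_4^5 does not belong to the ideal generated by its partial derivatives (∂g_0/∂z_3, ∂g_0/∂z_4) in ℂ[[z_3, z_4]]; equivalently, g_0 is not quasihomogeneous in any coordinates. -/
/-! If `g₀ = a ∂ₓg₀ + b ∂ᵧg₀`, only the linear coefficients `a₁₀`, `b₀₁` of `a` and `b` reach the
monomials `x⁴`, `x²y³`, `y⁵` of `g₀`, where the right-hand side has coefficients `4a₁₀`,
`2a₁₀ + 3b₀₁` and `5b₀₁`. Hence the linear functional `f ↦ f₂₃ - ½ f₄₀ - ⅗ f₀₅` vanishes on the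
gradient ideal, while its value at `g₀` is `1 - ½ - ⅗ = -1/10`. -/

open MvPowerSeries

section PartialDerivative

variable {n : ℕ} (j : Fin n)

theorem coeff_psPderiv (a : Fin n →₀ ℕ) (f : MvPowerSeries (Fin n) ℂ) :
    coeff a (psPderiv j f) = (a j + 1) * coeff (a + Finsupp.single j 1) f :=
  rfl

theorem psPderiv_add (f g : MvPowerSeries (Fin n) ℂ) :
    psPderiv j (f + g) = psPderiv j f + psPderiv j g := by
  ext a
  simp only [coeff_psPderiv, map_add, mul_add]

theorem psPderiv_monomial (m : Fin n →₀ ℕ) (c : ℂ) :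
    psPderiv j (monomial m c) = monomial (m - Finsupp.single j 1) (m j * c) := by
  classical
  ext a
  rw [coeff_psPderiv, coeff_monomial, coeff_monomial]
  by_cases ha : a + Finsupp.single j 1 = m
  · subst ha
    simp
  · rcases Nat.eq_zero_or_pos (m j) with hm | hm
    · simp [ha, hm]
    · have : a ≠ m - Finsupp.single j 1 := by
        rintro rfl
        exact ha (tsub_add_cancel_of_le (Finsupp.single_le_iff.mpr hm))
      simp [ha, this]

end PartialDerivative

noncomputable def bideg (i j : ℕ) : Fin 2 →₀ ℕ :=
  Finsupp.single 0 i + Finsupp.single 1 j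

section Bidegree

variable {i j k l : ℕ}

@[simp] theorem bideg_apply_zero : bideg i j 0 = i := by
  simp [bideg]

@[simp] theorem bideg_apply_one : bideg i j 1 = j := by
  simp [bideg]

theorem finsupp_ext_fin_two {m m' : Fin 2 →₀ ℕ} (h₀ : m 0 = m' 0) (h₁ : m 1 = m' 1) : m = m' := by
  ext a
  fin_cases a <;> assumption

@[simp] theorem bideg_inj : bideg i j = bideg k l ↔ i = k ∧ j = l := by
  refine ⟨fun h => ⟨?_, ?_⟩, fun ⟨hi, hj⟩ => hi ▸ hj ▸ rfl⟩
  · simpa using DFunLike.congr_fun h 0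
  · simpa using DFunLike.congr_fun h 1

@[simp] theorem bideg_le_bideg : bideg i j ≤ bideg k l ↔ i ≤ k ∧ j ≤ l := by
  simp [Finsupp.le_def, Fin.forall_fin_two]

@[simp] theorem bideg_sub_bideg : bideg i j - bideg k l = bideg (i - k) (j - l) :=
  finsupp_ext_fin_two (by simp) (by simp)

theorem single_zero_eq_bideg : Finsupp.single (0 : Fin 2) i = bideg i 0 :=
  finsupp_ext_fin_two (by simp) (by simp)

theorem single_one_eq_bideg : Finsupp.single (1 : Fin 2) j = bideg 0 j :=
  finsupp_ext_fin_two (by simp) (by simp)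

theorem X_pow_mul_X_pow_eq_monomial :
    (X 0 ^ i * X 1 ^ j : MvPowerSeries (Fin 2) ℂ) = monomial (bideg i j) 1 := by
  rw [X_pow_eq, X_pow_eq, monomial_mul_monomial, one_mul, bideg]

theorem psPderiv_zero_monomial_bideg (c : ℂ) :
    psPderiv 0 (monomial (bideg i j) c) = monomial (bideg (i - 1) j) (i * c) := by
  rw [psPderiv_monomial, single_zero_eq_bideg, bideg_sub_bideg, bideg_apply_zero, Nat.sub_zero]

theorem psPderiv_one_monomial_bideg (c : ℂ) :
    psPderiv 1 (monomial (bideg i j) c) = monomial (bideg i (j - 1)) (j * c) := by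
  rw [psPderiv_monomial, single_one_eq_bideg, bideg_sub_bideg, bideg_apply_one, Nat.sub_zero]

end Bidegree

noncomputable def g₀ : MvPowerSeries (Fin 2) ℂ :=
  X 0 ^ 4 + X 0 ^ 2 * X 1 ^ 3 + X 1 ^ 5

theorem g₀_eq_sum_monomial :
    g₀ = monomial (bideg 4 0) 1 + monomial (bideg 2 3) 1 + monomial (bideg 0 5) 1 := by
  simp only [g₀, ← X_pow_mul_X_pow_eq_monomial, pow_zero, mul_one, one_mul]

theorem psPderiv_zero_g₀ :
    psPderiv 0 g₀ = monomial (bideg 3 0) 4 + monomial (bideg 1 3) 2 := by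
  simp only [g₀_eq_sum_monomial, psPderiv_add, psPderiv_zero_monomial_bideg]
  norm_num

theorem psPderiv_one_g₀ :
    psPderiv 1 g₀ = monomial (bideg 2 2) 3 + monomial (bideg 0 4) 5 := by
  simp only [g₀_eq_sum_monomial, psPderiv_add, psPderiv_one_monomial_bideg]
  norm_num

theorem coeff_mul_psPderiv_zero_g₀ (a : MvPowerSeries (Fin 2) ℂ) :
    coeff (bideg 4 0) (a * psPderiv 0 g₀) = 4 * coeff (bideg 1 0) a ∧
      coeff (bideg 2 3) (a * psPderiv 0 g₀) = 2 * coeff (bideg 1 0) a ∧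
      coeff (bideg 0 5) (a * psPderiv 0 g₀) = 0 := by
  refine ⟨?_, ?_, ?_⟩ <;> simp [psPderiv_zero_g₀, mul_add, coeff_mul_monomial, mul_comm]

theorem coeff_mul_psPderiv_one_g₀ (b : MvPowerSeries (Fin 2) ℂ) :
    coeff (bideg 4 0) (b * psPderiv 1 g₀) = 0 ∧
      coeff (bideg 2 3) (b * psPderiv 1 g₀) = 3 * coeff (bideg 0 1) b ∧
      coeff (bideg 0 5) (b * psPderiv 1 g₀) = 5 * coeff (bideg 0 1) b := by
  refine ⟨?_, ?_, ?_⟩ <;> simp [psPderiv_one_g₀, mul_add, coeff_mul_monomial, mul_comm]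

noncomputable def gradientAnnihilator : MvPowerSeries (Fin 2) ℂ →ₗ[ℂ] ℂ :=
  coeff (bideg 2 3) - (1 / 2 : ℂ) • coeff (bideg 4 0) - (3 / 5 : ℂ) • coeff (bideg 0 5)

theorem gradientAnnihilator_apply (f : MvPowerSeries (Fin 2) ℂ) :
    gradientAnnihilator f =
      coeff (bideg 2 3) f - 1 / 2 * coeff (bideg 4 0) f - 3 / 5 * coeff (bideg 0 5) f :=
  rfl

theorem gradientAnnihilator_eq_zero_of_mem {f : MvPowerSeries (Fin 2) ℂ}
    (hf : f ∈ Ideal.span {psPderiv 0 g₀, psPderiv 1 g₀}) : gradientAnnihilator f = 0 := by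
  obtain ⟨a, b, rfl⟩ := Ideal.mem_span_pair.mp hf
  obtain ⟨ha₁, ha₂, ha₃⟩ := coeff_mul_psPderiv_zero_g₀ a
  obtain ⟨hb₁, hb₂, hb₃⟩ := coeff_mul_psPderiv_one_g₀ b
  rw [map_add, gradientAnnihilator_apply, gradientAnnihilator_apply, ha₁, ha₂, ha₃, hb₁, hb₂, hb₃]
  ring

theorem gradientAnnihilator_g₀ : gradientAnnihilator g₀ = -1 / 10 := by
  norm_num [gradientAnnihilator_apply, g₀_eq_sum_monomial, coeff_monomial]

/-- The series `g₀ := x⁴ + x² y³ + y⁵` does not belong to the ideal generated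
by its partial derivatives in `ℂ[[x, y]]` (so `g₀` is not quasihomogeneous in
any coordinates). -/
theorem not_mem_gradient_ideal :
    letI g₀ : MvPowerSeries (Fin 2) ℂ :=
      MvPowerSeries.X 0 ^ 4 + MvPowerSeries.X 0 ^ 2 * MvPowerSeries.X 1 ^ 3 +
        MvPowerSeries.X 1 ^ 5
    g₀ ∉ Ideal.span {psPderiv 0 g₀, psPderiv 1 g₀} := by
  intro hmem
  have h := gradientAnnihilator_eq_zero_of_mem (f := g₀) hmem
  rw [gradientAnnihilator_g₀] at h
  norm_num at h
end

section
/- Suppose f : ℂ^n → ℂ is a polynomial quasihomogeneous of type (1; l_1, ..., l_n) with rational weights l_i ∈ (0, 1/2]. Let N be a positive integer and let φ(t) = (c_1 t^{m_1} + ..., ..., c_n t^{m_n} + ...) be an analytic curve with ord φ_i ≥ N l_i for all i. Then ord((∂f/∂z_j) ∘ φ) ≥ N(1 − l_j) for every j. -/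
open MvPolynomial PowerSeries

lemma mul_order_aux (p q : PowerSeries ℂ) (α β : ℚ)
    (hp : ∀ m : ℕ, (m : ℚ) < α → PowerSeries.coeff m p = 0)
    (hq : ∀ m : ℕ, (m : ℚ) < β → PowerSeries.coeff m q = 0) :
    ∀ m : ℕ, (m : ℚ) < α + β → PowerSeries.coeff m (p * q) = 0 := by
  intro m hm
  rw [PowerSeries.coeff_mul]
  apply Finset.sum_eq_zero
  rintro ⟨i, j⟩ hij
  have hij : i + j = m := by simpa using hij
  have hcast : (i : ℚ) + (j : ℚ) = (m : ℚ) := by exact_mod_cast congrArg Nat.cast hij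
  by_cases hi : (i : ℚ) < α
  · rw [hp i hi, zero_mul]
  · push_neg at hi
    rw [hq j (by linarith), mul_zero]

lemma pow_order_aux (p : PowerSeries ℂ) (α : ℚ)
    (hp : ∀ m : ℕ, (m : ℚ) < α → PowerSeries.coeff m p = 0) (k : ℕ) :
    ∀ m : ℕ, (m : ℚ) < (k : ℚ) * α → PowerSeries.coeff m (p ^ k) = 0 := by
  induction k with
  | zero =>
    intro m hm
    exfalso
    simp at hm
    exact absurd hm (not_lt.mpr (by positivity))
  | succ k ih =>
    intro m hm
    rw [pow_succ]
    refine mul_order_aux _ _ ((k : ℚ) * α) α ih hp m ?_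
    push_cast at hm ⊢
    linarith

lemma prod_order_aux {n : ℕ} (φ : Fin n → PowerSeries ℂ) (w : Fin n → ℚ)
    (hφ : ∀ i, ∀ m : ℕ, (m : ℚ) < w i → PowerSeries.coeff m (φ i) = 0)
    (b : Fin n → ℕ) (s : Finset (Fin n)) :
    ∀ m : ℕ, (m : ℚ) < ∑ i ∈ s, (b i : ℚ) * w i →
      PowerSeries.coeff m (∏ i ∈ s, φ i ^ b i) = 0 := by
  induction s using Finset.induction with
  | empty =>
    intro m hm
    simp at hm
    exact absurd hm (not_lt.mpr (by positivity))
  | @insert x s hx ih =>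
    intro m hm
    rw [Finset.prod_insert hx]
    refine mul_order_aux _ _ ((b x : ℚ) * w x) (∑ i ∈ s, (b i : ℚ) * w i)
      (pow_order_aux _ _ (hφ x) _) ih m ?_
    rwa [Finset.sum_insert hx] at hm

/-- Let `f` be quasihomogeneous of type `(1; l)` with rational weights
`l i ∈ (0, 1/2]`, `N` a positive integer, and `φ` a formal curve with
`ord (φ i) ≥ N * l i` for all `i`.  Then for every `j`,
`ord ((∂f/∂z j) ∘ φ) ≥ N * (1 − l j)` (stated via vanishing of all
coefficients of index `< N (1 − l j)`). -/
theorem curve_order_lower_bound {n : ℕ}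
    (f : MvPolynomial (Fin n) ℂ) (l : Fin n → ℚ)
    (hl : ∀ i, 0 < l i ∧ l i ≤ 1 / 2)
    (hqh : ∀ a ∈ f.support, ∑ i, (a i : ℚ) * l i = 1)
    (N : ℕ) (hN : 0 < N) (φ : Fin n → PowerSeries ℂ)
    (hφ : ∀ i, ∀ m : ℕ, (m : ℚ) < (N : ℚ) * l i →
      PowerSeries.coeff m (φ i) = 0) :
    ∀ j : Fin n, ∀ m : ℕ, (m : ℚ) < (N : ℚ) * (1 - l j) →
      PowerSeries.coeff m (MvPolynomial.aeval φ (pderiv j f)) = 0 := by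
  intro j m hm
  conv_lhs => rw [f.as_sum]
  rw [map_sum, map_sum, map_sum]
  apply Finset.sum_eq_zero
  intro a ha
  rw [pderiv_monomial, aeval_monomial]
  by_cases haj : a j = 0
  · simp [haj]
  · have haj1 : 1 ≤ a j := Nat.one_le_iff_ne_zero.mpr haj
    have : PowerSeries.coeff m
        ((a - Finsupp.single j 1 : Fin n →₀ ℕ).prod fun i k => φ i ^ k) = 0 := by
      rw [Finsupp.prod_fintype _ _ (fun i => pow_zero (φ i))]
      refine prod_order_aux φ (fun i => (N : ℚ) * l i) hφ _ Finset.univ m ?_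
      have hb : ∀ i, (((a - Finsupp.single j 1 : Fin n →₀ ℕ) i : ℕ) : ℚ) * ((N : ℚ) * l i)
          = (N : ℚ) * ((a i : ℚ) * l i) - (if i = j then (N : ℚ) * l i else 0) := by
        intro i
        rcases eq_or_ne i j with rfl | hij
        · rw [Finsupp.tsub_apply, Finsupp.single_apply, if_pos rfl,
            Nat.cast_sub haj1]
          push_cast
          simp
          ring
        · rw [Finsupp.tsub_apply, Finsupp.single_apply, if_neg (Ne.symm hij),
            if_neg hij, Nat.sub_zero]
          ring
      rw [Finset.sum_congr rfl (fun i _ => hb i), Finset.sum_sub_distrib,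
        Finset.sum_ite_eq' Finset.univ j, if_pos (Finset.mem_univ j),
        ← Finset.mul_sum, hqh a ha]
      calc (m : ℚ) < (N : ℚ) * (1 - l j) := hm
        _ = (N : ℚ) * 1 - (N : ℚ) * l j := by ring
    rw [← Algebra.smul_def, LinearMap.map_smul, this, smul_zero]
end
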